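/- Let R be a Γ-graded integral domain. Any nonempty intersection W := ⋂_{i∈I} W_{A_i} of subbasic open sets of the Zariski topology on HStar(R) is a complete lattice under ≤ (the suprema and infima computed in HStar(R) stay in W), and consequently W is quasi-compact. In particular W_A is quasi-compact for every nonzero homogeneous fractional ideal A. -/

import Mathlib

open FractionalIdeal
open scoped Classical

section Setup

variable {Γ : Type*} [AddCommMonoid Γ] [LinearOrder Γ] [IsOrderedCancelAddMonoid Γ] [DecidableEq Γ]
  {R : Type*} [CommRing R] [IsDomain R]
  (𝒜 : Γ → AddSubgroup R) [GradedRing 𝒜]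
  (K : Type*) [Field K] [Algebra R K] [IsFractionRing R K]

/-- The integral ideal corresponding to a fractional ideal contained in `R`. -/
def idealOf (J : FractionalIdeal (nonZeroDivisors R) K) : Ideal R :=
  (J : Submodule R K).comap (Algebra.linearMap R K)

/-- An integral ideal is homogeneous if it contains all homogeneous components of its elements. -/
def IsHomIdeal (I : Ideal R) : Prop := ∀ f ∈ I, ∀ γ : Γ, GradedRing.proj 𝒜 γ f ∈ I

/-- `C(I)`: the homogeneous ideal generated by the homogeneous components of elements of `I`. -/
def homC (I : Ideal R) : Ideal R :=
  Ideal.span {x | ∃ f ∈ I, ∃ γ : Γ, x = GradedRing.proj 𝒜 γ f}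

/-- `C(J)` for a fractional ideal `J ⊆ R`, as a fractional ideal. -/
def Cfrac (J : FractionalIdeal (nonZeroDivisors R) K) : FractionalIdeal (nonZeroDivisors R) K :=
  ↑(homC 𝒜 (idealOf K J))

/-- A fractional ideal is homogeneous if some nonzero homogeneous `s ∈ R` multiplies it into a
homogeneous integral ideal. -/
def IsHomFrac (A : FractionalIdeal (nonZeroDivisors R) K) : Prop :=
  ∃ s : R, s ≠ 0 ∧ SetLike.IsHomogeneousElem 𝒜 s ∧
    spanSingleton (nonZeroDivisors R) (algebraMap R K s) * A ≤ 1 ∧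
    IsHomIdeal 𝒜 (idealOf K (spanSingleton (nonZeroDivisors R) (algebraMap R K s) * A))

/-- A homogeneous element of the homogeneous quotient field, viewed inside `K`. -/
def IsHomElem (x : K) : Prop :=
  ∃ a b : R, SetLike.IsHomogeneousElem 𝒜 a ∧ SetLike.IsHomogeneousElem 𝒜 b ∧ b ≠ 0 ∧
    x * algebraMap R K b = algebraMap R K a

end Setup

/-- A homogeneous star operation on the graded domain `R`. -/
structure HomStarOp {Γ : Type*} [AddCommMonoid Γ] [LinearOrder Γ] [IsOrderedCancelAddMonoid Γ] [DecidableEq Γ]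
    {R : Type*} [CommRing R] [IsDomain R] (𝒜 : Γ → AddSubgroup R) [GradedRing 𝒜]
    (K : Type*) [Field K] [Algebra R K] [IsFractionRing R K] where
  toFun : FractionalIdeal (nonZeroDivisors R) K → FractionalIdeal (nonZeroDivisors R) K
  hom : ∀ A, A ≠ 0 → IsHomFrac 𝒜 K A → IsHomFrac 𝒜 K (toFun A)
  map_span : ∀ x : K, x ≠ 0 → IsHomElem 𝒜 K x →
    toFun (spanSingleton (nonZeroDivisors R) x) = spanSingleton (nonZeroDivisors R) x
  map_smul : ∀ x : K, x ≠ 0 → IsHomElem 𝒜 K x → ∀ A, A ≠ 0 → IsHomFrac 𝒜 K A →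
    toFun (spanSingleton (nonZeroDivisors R) x * A) = spanSingleton (nonZeroDivisors R) x * toFun A
  le_star : ∀ A, A ≠ 0 → IsHomFrac 𝒜 K A → A ≤ toFun A
  mono : ∀ A B, A ≠ 0 → B ≠ 0 → IsHomFrac 𝒜 K A → IsHomFrac 𝒜 K B → A ≤ B → toFun A ≤ toFun B
  idem : ∀ A, A ≠ 0 → IsHomFrac 𝒜 K A → toFun (toFun A) = toFun A

/-- A classical star operation on the domain `R`. -/
structure StarOp (R : Type*) [CommRing R] [IsDomain R]
    (K : Type*) [Field K] [Algebra R K] [IsFractionRing R K] where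
  toFun : FractionalIdeal (nonZeroDivisors R) K → FractionalIdeal (nonZeroDivisors R) K
  map_span : ∀ x : K, x ≠ 0 →
    toFun (spanSingleton (nonZeroDivisors R) x) = spanSingleton (nonZeroDivisors R) x
  map_smul : ∀ x : K, x ≠ 0 → ∀ A, A ≠ 0 →
    toFun (spanSingleton (nonZeroDivisors R) x * A) = spanSingleton (nonZeroDivisors R) x * toFun A
  le_star : ∀ A, A ≠ 0 → A ≤ toFun A
  mono : ∀ A B, A ≠ 0 → B ≠ 0 → A ≤ B → toFun A ≤ toFun B
  idem : ∀ A, A ≠ 0 → toFun (toFun A) = toFun A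

section EStar

variable {Γ : Type*} [AddCommMonoid Γ] [LinearOrder Γ] [IsOrderedCancelAddMonoid Γ] [DecidableEq Γ]
  {R : Type*} [CommRing R] [IsDomain R]
  (𝒜 : Γ → AddSubgroup R) [GradedRing 𝒜]
  (K : Type*) [Field K] [Algebra R K] [IsFractionRing R K]

/-- The submodule `⋂ { z⁻¹ (C(zA))^⋆ : 0 ≠ z ∈ (R : A) }`. -/
def eStarSub (s : HomStarOp 𝒜 K) (A : FractionalIdeal (nonZeroDivisors R) K) : Submodule R K :=
  ⨅ z ∈ {z : K | z ≠ 0 ∧ spanSingleton (nonZeroDivisors R) z * A ≤ 1},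
    ↑(spanSingleton (nonZeroDivisors R) z⁻¹ *
      s.toFun (Cfrac 𝒜 K (spanSingleton (nonZeroDivisors R) z * A)))

/-- The extension `e(⋆)` of a homogeneous star operation `⋆`,
`A^{e(⋆)} := ⋂ { z⁻¹ (C(zA))^⋆ : 0 ≠ z ∈ (R : A) }` (which is a fractional ideal whenever
`A` is a nonzero fractional ideal). -/
noncomputable def eStar (s : HomStarOp 𝒜 K) (A : FractionalIdeal (nonZeroDivisors R) K) :
    FractionalIdeal (nonZeroDivisors R) K :=
  if h : IsFractional (nonZeroDivisors R) (eStarSub 𝒜 K s A) then ⟨_, h⟩ else 0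

end EStar

/-!
Order `HStar(R)` by `⋆ ≤ τ` iff `B^⋆ ⊆ B^τ` for all nonzero homogeneous `B`. A nonempty set `Δ`
has a meet `⋀ Δ : B ↦ ⋂_{⋆ ∈ Δ} B^⋆`; the only axiom that needs an argument is homogeneity of
`⋂ B^⋆`, and it holds because for homogeneous `c` the ideal `R ∩ c B^⋆` is homogeneous,
whichever homogeneous denominator witnesses the homogeneity of `B^⋆`.

Each `W_B` is an upper set, hence so is `W`. If `Δ ⊆ W`, then `⋀ Δ ∈ W`; an infimum of `Δ` lies
above `⋀ Δ` and a supremum above any element of `Δ`, so both lie in `W`. Finally `⋀ W` is the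
least element of `W`, and in a topology generated by upper sets every open set containing the
least element of `W` contains all of `W`, so `W` is compact.
-/

open TopologicalSpace Filter

theorem isCompact_generateFrom_of_isLeast {α : Type*} [Preorder α] {g : Set (Set α)}
    (hg : ∀ u ∈ g, IsUpperSet u) {s : Set α} {x : α} (hx : IsLeast s x) :
    @IsCompact α (generateFrom g) s := by
  let _ := generateFrom g
  intro f hf hfs
  refine ⟨x, hx.1, ClusterPt.of_le_nhds ?_⟩
  rw [nhds_generateFrom]
  refine le_iInf₂ fun u ⟨hxu, hu⟩ => le_principal_iff.2 ?_
  exact mem_of_superset (le_principal_iff.1 hfs) fun y hy => hg u hu (hx.2 hy) hxu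

theorem Ideal.IsHomogeneous.colon_singleton {ι σ A : Type*} [DecidableEq ι] [AddMonoid ι]
    [IsRightCancelAdd ι] [CommSemiring A] [SetLike σ A] [AddSubmonoidClass σ A] {𝒜 : ι → σ}
    [GradedRing 𝒜] {I : Ideal A} (hI : I.IsHomogeneous 𝒜) {c : A}
    (hc : SetLike.IsHomogeneousElem 𝒜 c) : (I.colon {c}).IsHomogeneous 𝒜 := by
  let _ : AddRightCancelMonoid ι := {}
  obtain ⟨ε, hcε⟩ := hc
  intro γ r hr
  rw [Submodule.mem_colon_singleton, smul_eq_mul] at hr ⊢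
  rw [← DirectSum.coe_decompose_mul_add_of_right_mem 𝒜 hcε]
  exact hI _ hr

section FractionalIdeal

variable {R K : Type*} [CommRing R] [Field K] [Algebra R K]

theorem mem_idealOf {J : FractionalIdeal (nonZeroDivisors R) K} {r : R} :
    r ∈ idealOf K J ↔ algebraMap R K r ∈ J := Iff.rfl

variable [IsFractionRing R K]

theorem FractionalIdeal.mem_spanSingleton_mul_iff {c x : K} (hc : c ≠ 0)
    {J : FractionalIdeal (nonZeroDivisors R) K} :
    x ∈ spanSingleton (nonZeroDivisors R) c * J ↔ c⁻¹ * x ∈ J := by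
  rw [mem_singleton_mul]
  constructor
  · rintro ⟨y, hy, rfl⟩
    rwa [inv_mul_cancel_left₀ hc]
  · exact fun h => ⟨c⁻¹ * x, h, (mul_inv_cancel_left₀ hc x).symm⟩

theorem idealOf_coeIdeal (I : Ideal R) :
    idealOf K (I : FractionalIdeal (nonZeroDivisors R) K) = I :=
  Submodule.comap_map_eq_of_injective (IsFractionRing.injective R K) I

theorem algebraMap_mem_coeIdeal_iff {I : Ideal R} {r : R} :
    algebraMap R K r ∈ (I : FractionalIdeal (nonZeroDivisors R) K) ↔ r ∈ I :=
  SetLike.ext_iff.1 (idealOf_coeIdeal I) r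

theorem coeIdeal_idealOf {J : FractionalIdeal (nonZeroDivisors R) K} (hJ : J ≤ 1) :
    ((idealOf K J : Ideal R) : FractionalIdeal (nonZeroDivisors R) K) = J := by
  obtain ⟨I, rfl⟩ := le_one_iff_exists_coeIdeal.mp hJ
  rw [idealOf_coeIdeal]

end FractionalIdeal

section Homogeneous

variable {Γ : Type*} [AddCommMonoid Γ] [DecidableEq Γ] {R : Type*} [CommRing R]
  {𝒜 : Γ → AddSubgroup R} [GradedRing 𝒜]

theorem isHomIdeal_iff {I : Ideal R} : IsHomIdeal 𝒜 I ↔ I.IsHomogeneous 𝒜 := by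
  simp only [IsHomIdeal, Ideal.IsHomogeneous, GradedRing.proj_apply]
  exact ⟨fun h γ f hf => h f hf γ, fun h f hf γ => h γ hf⟩

variable [IsRightCancelAdd Γ] {K : Type*} [Field K] [Algebra R K] [IsFractionRing R K]

theorem IsHomFrac.isHomogeneous_idealOf_spanSingleton_mul
    {J : FractionalIdeal (nonZeroDivisors R) K} (hJ : IsHomFrac 𝒜 K J) {c : R}
    (hc : SetLike.IsHomogeneousElem 𝒜 c) :
    (idealOf K (spanSingleton (nonZeroDivisors R) (algebraMap R K c) * J)).IsHomogeneous 𝒜 := by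
  obtain ⟨s, hs0, hs, hsJ, hI⟩ := hJ
  have hs' : algebraMap R K s ≠ 0 := (map_ne_zero_iff _ (IsFractionRing.injective R K)).2 hs0
  set I := idealOf K (spanSingleton (nonZeroDivisors R) (algebraMap R K s) * J)
  have hcolon : idealOf K (spanSingleton (nonZeroDivisors R) (algebraMap R K c) * J) =
      (Ideal.span {c} * I).colon {s} := by
    ext f
    rw [Submodule.mem_colon_singleton, smul_eq_mul, mul_comm f, mem_idealOf,
      ← algebraMap_mem_coeIdeal_iff (K := K), coeIdeal_mul, coeIdeal_idealOf hsJ,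
      coeIdeal_span_singleton, mul_left_comm, map_mul, mem_spanSingleton_mul_iff hs',
      inv_mul_cancel_left₀ hs']
  rw [hcolon]
  refine Ideal.IsHomogeneous.colon_singleton ?_ hs
  exact (Ideal.homogeneous_span 𝒜 {c} fun x hx => hx ▸ hc).mul (isHomIdeal_iff.1 hI)

end Homogeneous

namespace HomStarOp

variable {Γ : Type*} [AddCommMonoid Γ] [LinearOrder Γ] [IsOrderedCancelAddMonoid Γ]
  [DecidableEq Γ] {R : Type*} [CommRing R] [IsDomain R] {𝒜 : Γ → AddSubgroup R} [GradedRing 𝒜]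
  {K : Type*} [Field K] [Algebra R K] [IsFractionRing R K]

instance : Preorder (HomStarOp 𝒜 K) where
  le s t := ∀ B, B ≠ 0 → IsHomFrac 𝒜 K B → s.toFun B ≤ t.toFun B
  le_refl _ _ _ _ := le_rfl
  le_trans _ _ _ hst htu B hB hBf := (hst B hB hBf).trans (htu B hB hBf)

theorem isUpperSet_setOf_one_mem {B : FractionalIdeal (nonZeroDivisors R) K} (hB : B ≠ 0)
    (hBf : IsHomFrac 𝒜 K B) : IsUpperSet {t : HomStarOp 𝒜 K | (1 : K) ∈ t.toFun B} :=
  fun _ _ hst h => hst B hB hBf h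

variable {Δ : Set (HomStarOp 𝒜 K)} (hΔ : Δ.Nonempty)

def meetIdeal (B : FractionalIdeal (nonZeroDivisors R) K) :
    FractionalIdeal (nonZeroDivisors R) K :=
  ⟨⨅ u ∈ Δ, (u.toFun B : Submodule R K),
    let ⟨_, hu⟩ := hΔ; isFractional_of_le (iInf₂_le _ hu)⟩

theorem mem_meetIdeal {B : FractionalIdeal (nonZeroDivisors R) K} {x : K} :
    x ∈ meetIdeal hΔ B ↔ ∀ u ∈ Δ, x ∈ u.toFun B := by
  show x ∈ (⨅ u ∈ Δ, (u.toFun B : Submodule R K)) ↔ _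
  simp only [Submodule.mem_iInf, mem_coe]

theorem meetIdeal_le {B : FractionalIdeal (nonZeroDivisors R) K} {u : HomStarOp 𝒜 K}
    (hu : u ∈ Δ) : meetIdeal hΔ B ≤ u.toFun B :=
  fun _ hx => (mem_meetIdeal hΔ).1 hx u hu

theorem le_meetIdeal {B C : FractionalIdeal (nonZeroDivisors R) K}
    (h : ∀ u ∈ Δ, C ≤ u.toFun B) : C ≤ meetIdeal hΔ B :=
  fun _ hx => (mem_meetIdeal hΔ).2 fun u hu => h u hu hx

theorem meetIdeal_spanSingleton_mul {x : K} (hx : x ≠ 0)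
    {B : FractionalIdeal (nonZeroDivisors R) K}
    (h : ∀ u ∈ Δ, u.toFun (spanSingleton (nonZeroDivisors R) x * B) =
      spanSingleton (nonZeroDivisors R) x * u.toFun B) :
    meetIdeal hΔ (spanSingleton (nonZeroDivisors R) x * B) =
      spanSingleton (nonZeroDivisors R) x * meetIdeal hΔ B := by
  ext y
  simp only [mem_meetIdeal, mem_spanSingleton_mul_iff hx]
  exact forall₂_congr fun u hu => by rw [h u hu, mem_spanSingleton_mul_iff hx]

theorem idealOf_spanSingleton_mul_meetIdeal {c : K} (hc : c ≠ 0)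
    (B : FractionalIdeal (nonZeroDivisors R) K) :
    idealOf K (spanSingleton (nonZeroDivisors R) c * meetIdeal hΔ B) =
      ⨅ u ∈ Δ, idealOf K (spanSingleton (nonZeroDivisors R) c * u.toFun B) := by
  ext f
  simp only [mem_idealOf, Submodule.mem_iInf, mem_spanSingleton_mul_iff hc, mem_meetIdeal]

theorem isHomFrac_meetIdeal {B : FractionalIdeal (nonZeroDivisors R) K} (hB : B ≠ 0)
    (hBf : IsHomFrac 𝒜 K B) : IsHomFrac 𝒜 K (meetIdeal hΔ B) := by
  obtain ⟨u₀, hu₀⟩ := id hΔ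
  obtain ⟨s, hs0, hs, hsle, -⟩ := u₀.hom B hB hBf
  have hs' : algebraMap R K s ≠ 0 := (map_ne_zero_iff _ (IsFractionRing.injective R K)).2 hs0
  refine ⟨s, hs0, hs, (_root_.mul_le_mul_right (meetIdeal_le hΔ hu₀) _).trans hsle, ?_⟩
  rw [isHomIdeal_iff, idealOf_spanSingleton_mul_meetIdeal hΔ hs']
  exact Ideal.IsHomogeneous.iInf₂ fun u _ =>
    (u.hom B hB hBf).isHomogeneous_idealOf_spanSingleton_mul hs

theorem meetIdeal_idem {B : FractionalIdeal (nonZeroDivisors R) K} (hB : B ≠ 0)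
    (hBf : IsHomFrac 𝒜 K B) : meetIdeal hΔ (meetIdeal hΔ B) = meetIdeal hΔ B := by
  have hle : B ≤ meetIdeal hΔ B := le_meetIdeal hΔ fun u _ => u.le_star B hB hBf
  have hne : meetIdeal hΔ B ≠ 0 := fun h => hB (FractionalIdeal.le_zero_iff.1 (h ▸ hle))
  have hhom := isHomFrac_meetIdeal hΔ hB hBf
  refine le_antisymm (le_meetIdeal hΔ fun u hu => ?_)
    (le_meetIdeal hΔ fun u _ => u.le_star _ hne hhom)
  have hune : u.toFun B ≠ 0 :=
    fun h => hB (FractionalIdeal.le_zero_iff.1 (h ▸ u.le_star B hB hBf))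
  calc meetIdeal hΔ (meetIdeal hΔ B) ≤ u.toFun (meetIdeal hΔ B) := meetIdeal_le hΔ hu
    _ ≤ u.toFun (u.toFun B) := u.mono _ _ hne hune hhom (u.hom B hB hBf) (meetIdeal_le hΔ hu)
    _ = u.toFun B := u.idem B hB hBf

def meet : HomStarOp 𝒜 K where
  toFun := meetIdeal hΔ
  hom _ := isHomFrac_meetIdeal hΔ
  map_span x hx hxh := le_antisymm
    ((meetIdeal_le hΔ hΔ.some_mem).trans (hΔ.some.map_span x hx hxh).le)
    (le_meetIdeal hΔ fun u _ => (u.map_span x hx hxh).ge)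
  map_smul x hx hxh B hB hBf :=
    meetIdeal_spanSingleton_mul hΔ hx fun u _ => u.map_smul x hx hxh B hB hBf
  le_star B hB hBf := le_meetIdeal hΔ fun u _ => u.le_star B hB hBf
  mono B C hB hC hBf hCf hBC :=
    le_meetIdeal hΔ fun u hu => (meetIdeal_le hΔ hu).trans (u.mono B C hB hC hBf hCf hBC)
  idem _ := meetIdeal_idem hΔ

theorem mem_meet_toFun {B : FractionalIdeal (nonZeroDivisors R) K} {x : K} :
    x ∈ (meet hΔ).toFun B ↔ ∀ u ∈ Δ, x ∈ u.toFun B :=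
  mem_meetIdeal hΔ

theorem meet_le {u : HomStarOp 𝒜 K} (hu : u ∈ Δ) : meet hΔ ≤ u :=
  fun _ _ _ => meetIdeal_le hΔ hu

end HomStarOp

theorem stmt_17_general
    {Γ : Type*} [AddCommMonoid Γ] [LinearOrder Γ] [IsOrderedCancelAddMonoid Γ] [DecidableEq Γ]
    {R : Type*} [CommRing R] [IsDomain R]
    (𝒜 : Γ → AddSubgroup R) [GradedRing 𝒜]
    (K : Type*) [Field K] [Algebra R K] [IsFractionRing R K]
    {ι : Type*} (A : ι → FractionalIdeal (nonZeroDivisors R) K)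
    (hA : ∀ i, A i ≠ 0 ∧ IsHomFrac 𝒜 K (A i)) :
    letI : TopologicalSpace (HomStarOp 𝒜 K) := TopologicalSpace.generateFrom
      {U | ∃ B : FractionalIdeal (nonZeroDivisors R) K, B ≠ 0 ∧ IsHomFrac 𝒜 K B ∧
        U = {t : HomStarOp 𝒜 K | (1 : K) ∈ t.toFun B}}
    ∀ W : Set (HomStarOp 𝒜 K),
      W = {t : HomStarOp 𝒜 K | ∀ i, (1 : K) ∈ t.toFun (A i)} → W.Nonempty →
      ((∀ Δ ⊆ W, Δ.Nonempty →
        (∀ t : HomStarOp 𝒜 K,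
          ((∀ u ∈ Δ, ∀ B : FractionalIdeal (nonZeroDivisors R) K, B ≠ 0 → IsHomFrac 𝒜 K B →
            t.toFun B ≤ u.toFun B) ∧
          (∀ w : HomStarOp 𝒜 K,
            (∀ u ∈ Δ, ∀ B : FractionalIdeal (nonZeroDivisors R) K, B ≠ 0 → IsHomFrac 𝒜 K B →
              w.toFun B ≤ u.toFun B) →
            (∀ B : FractionalIdeal (nonZeroDivisors R) K, B ≠ 0 → IsHomFrac 𝒜 K B →
              w.toFun B ≤ t.toFun B))) → t ∈ W) ∧
        (∀ t : HomStarOp 𝒜 K,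
          ((∀ u ∈ Δ, ∀ B : FractionalIdeal (nonZeroDivisors R) K, B ≠ 0 → IsHomFrac 𝒜 K B →
            u.toFun B ≤ t.toFun B) ∧
          (∀ w : HomStarOp 𝒜 K,
            (∀ u ∈ Δ, ∀ B : FractionalIdeal (nonZeroDivisors R) K, B ≠ 0 → IsHomFrac 𝒜 K B →
              u.toFun B ≤ w.toFun B) →
            (∀ B : FractionalIdeal (nonZeroDivisors R) K, B ≠ 0 → IsHomFrac 𝒜 K B →
              t.toFun B ≤ w.toFun B))) → t ∈ W)) ∧
      IsCompact W) := by
  intro W hW hWne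
  have hWup : IsUpperSet W := by
    subst hW
    exact fun _ _ hst ht i => HomStarOp.isUpperSet_setOf_one_mem (hA i).1 (hA i).2 hst (ht i)
  have meet_mem : ∀ Δ ⊆ W, ∀ hΔ : Δ.Nonempty, HomStarOp.meet hΔ ∈ W := by
    subst hW
    exact fun Δ hΔW hΔ i => (HomStarOp.mem_meet_toFun hΔ).2 fun u hu => hΔW hu i
  refine ⟨fun Δ hΔW hΔ => ⟨?_, ?_⟩, ?_⟩
  · exact fun t ht => hWup (ht.2 _ fun _ => HomStarOp.meet_le hΔ) (meet_mem Δ hΔW hΔ)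
  · obtain ⟨u, hu⟩ := hΔ
    exact fun t ht => hWup (ht.1 u hu) (hΔW hu)
  · refine isCompact_generateFrom_of_isLeast ?_
      ⟨meet_mem W subset_rfl hWne, fun _ => HomStarOp.meet_le hWne⟩
    rintro U ⟨B, hB, hBf, rfl⟩
    exact HomStarOp.isUpperSet_setOf_one_mem hB hBf

/-- a nonempty intersection `W = ⋂ᵢ W_{Aᵢ}` of subbasic open sets of `HStar(R)` is
closed under infima and suprema (computed in `HStar(R)`) of its nonempty subsets — it is a
complete lattice — and `W` is quasi-compact. -/
theorem stmt_17
    {Γ : Type*} [AddCommMonoid Γ] [LinearOrder Γ] [IsOrderedCancelAddMonoid Γ] [DecidableEq Γ]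
    {R : Type*} [CommRing R] [IsDomain R]
    (𝒜 : Γ → AddSubgroup R) [GradedRing 𝒜]
    (K : Type*) [Field K] [Algebra R K] [IsFractionRing R K]
    {ι : Type*} [Nonempty ι] (A : ι → FractionalIdeal (nonZeroDivisors R) K)
    (hA : ∀ i, A i ≠ 0 ∧ IsHomFrac 𝒜 K (A i)) :
    letI : TopologicalSpace (HomStarOp 𝒜 K) := TopologicalSpace.generateFrom
      {U | ∃ B : FractionalIdeal (nonZeroDivisors R) K, B ≠ 0 ∧ IsHomFrac 𝒜 K B ∧
        U = {t : HomStarOp 𝒜 K | (1 : K) ∈ t.toFun B}}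
    ∀ W : Set (HomStarOp 𝒜 K),
      W = {t : HomStarOp 𝒜 K | ∀ i, (1 : K) ∈ t.toFun (A i)} → W.Nonempty →
      ((∀ Δ ⊆ W, Δ.Nonempty →
        (∀ t : HomStarOp 𝒜 K,
          ((∀ u ∈ Δ, ∀ B : FractionalIdeal (nonZeroDivisors R) K, B ≠ 0 → IsHomFrac 𝒜 K B →
            t.toFun B ≤ u.toFun B) ∧
          (∀ w : HomStarOp 𝒜 K,
            (∀ u ∈ Δ, ∀ B : FractionalIdeal (nonZeroDivisors R) K, B ≠ 0 → IsHomFrac 𝒜 K B →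
              w.toFun B ≤ u.toFun B) →
            (∀ B : FractionalIdeal (nonZeroDivisors R) K, B ≠ 0 → IsHomFrac 𝒜 K B →
              w.toFun B ≤ t.toFun B))) → t ∈ W) ∧
        (∀ t : HomStarOp 𝒜 K,
          ((∀ u ∈ Δ, ∀ B : FractionalIdeal (nonZeroDivisors R) K, B ≠ 0 → IsHomFrac 𝒜 K B →
            u.toFun B ≤ t.toFun B) ∧
          (∀ w : HomStarOp 𝒜 K,
            (∀ u ∈ Δ, ∀ B : FractionalIdeal (nonZeroDivisors R) K, B ≠ 0 → IsHomFrac 𝒜 K B →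
              u.toFun B ≤ w.toFun B) →
            (∀ B : FractionalIdeal (nonZeroDivisors R) K, B ≠ 0 → IsHomFrac 𝒜 K B →
              t.toFun B ≤ w.toFun B))) → t ∈ W)) ∧
      IsCompact W) :=
  stmt_17_general 𝒜 K A hA
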